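/- arXiv:1710.04633 — 8 statements merged into one kernel-verified Lean document; each statement's English description precedes it below -/
import Mathlib

section
/- Let $V = [n]$ and fix positive integers $r, k, a$ with $n \ge ra$ and $r > k \ge 1$, and let $i$ be a nonnegative integer with $i \le (\lfloor n/(a-1) \rfloor - k)/2$. For any family $\mathcal{T} = \{T_1, \ldots, T_{a-1}\}$ of $(k+2i)$-element subsets of $V$, the number of $r$-element subsets $E \subseteq V$ with $|E \cap T_j| \ge k+i$ for some $j \in [a-1]$ is at most the corresponding number for any family $\mathcal{T}' = \{T_1', \ldots, T_{a-1}'\}$ of $a-1$ pairwise disjoint $(k+2i)$-element subsets of $V$. -/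
/-!
Shifting. If two members of the family share a point `x`, the total size exceeds the size of
their union, so some `y` lies outside every member; swapping `x` for `y` in one member does not
lose capturing sets: a set captured before but not after is sent by the swap `x ↔ y` to a set
captured after but not before. Each shift enlarges the union, so after finitely many shifts the
family is pairwise disjoint, and two disjoint families with equal member sizes differ by a
permutation of the ground set, which preserves the count.
-/

open Finset Function

variable {α ι : Type*}

lemma exists_perm_mapsTo_of_pairwise_disjoint [Finite α] {S T : ι → Finset α}
    (hS : Pairwise (Disjoint on S)) (hT : Pairwise (Disjoint on T))
    (hST : ∀ j, #(S j) = #(T j)) : ∃ σ : Equiv.Perm α, ∀ j, Set.MapsTo σ (S j) (T j) := by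
  classical
  have hS' : Pairwise (Disjoint on fun j => (S j : Set α)) := fun i j h => disjoint_coe.2 (hS h)
  have hT' : Pairwise (Disjoint on fun j => (T j : Set α)) := fun i j h => disjoint_coe.2 (hT h)
  let e : (⋃ j, (S j : Set α)) ≃ (⋃ j, (T j : Set α)) :=
    (Set.unionEqSigmaOfDisjoint hS').trans <|
      (Equiv.sigmaCongrRight fun j => equivOfCardEq (hST j)).trans
        (Set.unionEqSigmaOfDisjoint hT').symm
  refine ⟨e.extendSubtype, fun j v hv => ?_⟩
  have hv' : v ∈ ⋃ j, (S j : Set α) := Set.mem_iUnion.2 ⟨j, hv⟩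
  have hv_sigma : (⟨v, hv'⟩ : ⋃ j, (S j : Set α)) =
      (Set.unionEqSigmaOfDisjoint hS').symm ⟨j, v, hv⟩ := rfl
  rw [Equiv.extendSubtype_apply_of_mem e v hv', hv_sigma]
  simp [e]

variable [DecidableEq α]

lemma card_biUnion_lt_sum_card {s : Finset ι} {S : ι → Finset α} {j₀ j₁ : ι} {x : α}
    (hj₀ : j₀ ∈ s) (hj₁ : j₁ ∈ s) (hne : j₀ ≠ j₁) (hx₀ : x ∈ S j₀) (hx₁ : x ∈ S j₁) :
    #(s.biUnion S) < ∑ j ∈ s, #(S j) := by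
  classical
  have hsub : s.biUnion S ⊆ (S j₀).erase x ∪ (s.erase j₀).biUnion S := by
    intro v hv
    obtain ⟨j, hj, hvj⟩ := mem_biUnion.1 hv
    simp only [mem_union, mem_erase, mem_biUnion]
    grind
  calc #(s.biUnion S) ≤ #((S j₀).erase x) + #((s.erase j₀).biUnion S) :=
        (card_le_card hsub).trans (card_union_le _ _)
    _ ≤ #((S j₀).erase x) + ∑ j ∈ s.erase j₀, #(S j) := by gcongr; exact card_biUnion_le
    _ < #(S j₀) + ∑ j ∈ s.erase j₀, #(S j) := Nat.add_lt_add_right (card_erase_lt_of_mem hx₀) _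
    _ = ∑ j ∈ s, #(S j) := add_sum_erase s (fun j => #(S j)) hj₀

section Swap

variable {x y : α} {E A : Finset α}

lemma map_swap_inter_subset_inter_map_swap (hyE : y ∈ E) (hyA : y ∉ A) :
    (E ∩ A).map (Equiv.swap x y).toEmbedding ⊆ E ∩ A.map (Equiv.swap x y).toEmbedding := by
  intro z
  simp only [mem_map_equiv, Equiv.symm_swap, mem_inter, Equiv.swap_apply_def]
  grind

lemma map_swap_inter_subset_inter (hyE : y ∉ E) (hyA : y ∉ A) :
    E.map (Equiv.swap x y).toEmbedding ∩ A ⊆ E ∩ A := by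
  intro z
  simp only [mem_map_equiv, Equiv.symm_swap, mem_inter, Equiv.swap_apply_def]
  grind

lemma map_swap_map_swap :
    (A.map (Equiv.swap x y).toEmbedding).map (Equiv.swap x y).toEmbedding = A := by
  ext z; simp [mem_map_equiv]

lemma insert_biUnion_subset_biUnion_update_swap [Fintype ι] [DecidableEq ι] {S : ι → Finset α}
    {j₀ j₁ : ι} (hne : j₀ ≠ j₁) (hx₀ : x ∈ S j₀) (hx₁ : x ∈ S j₁) (hy : y ∉ S j₀) :
    insert y (univ.biUnion S) ⊆
      univ.biUnion (update S j₀ ((S j₀).map (Equiv.swap x y).toEmbedding)) := by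
  intro v
  simp only [mem_insert, mem_biUnion, mem_univ, true_and]
  rintro (rfl | ⟨j, hv⟩)
  · exact ⟨j₀, by simpa⟩
  obtain rfl | hj := eq_or_ne j j₀
  · obtain rfl | hvx := eq_or_ne v x
    · exact ⟨j₁, by rwa [update_of_ne hne.symm]⟩
    · refine ⟨j, ?_⟩
      rw [update_self, mem_map_equiv, Equiv.symm_swap,
        Equiv.swap_apply_of_ne_of_ne hvx (ne_of_mem_of_not_mem hv hy)]
      exact hv
  · exact ⟨j, by rwa [update_of_ne hj]⟩

end Swap

def capturingSets [Fintype α] [Fintype ι] (t r : ℕ) (S : ι → Finset α) : Finset (Finset α) :=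
  {E ∈ powersetCard r univ | ∃ j, t ≤ #(E ∩ S j)}

section Capturing

variable [Fintype α] [Fintype ι] {t r : ℕ} {S T : ι → Finset α} {E : Finset α}

lemma mem_capturingSets : E ∈ capturingSets t r S ↔ #E = r ∧ ∃ j, t ≤ #(E ∩ S j) := by
  rw [capturingSets, mem_filter, mem_powersetCard_univ]

lemma card_capturingSets_le_of_mapsTo (σ : Equiv.Perm α) (h : ∀ j, Set.MapsTo σ (S j) (T j)) :
    #(capturingSets t r S) ≤ #(capturingSets t r T) := by
  refine card_le_card_of_injOn (·.map σ.toEmbedding) (fun E hE => ?_) (map_injective _).injOn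
  rw [mem_coe, mem_capturingSets] at hE ⊢
  obtain ⟨hEr, j, hj⟩ := hE
  refine ⟨by rw [card_map, hEr], j, hj.trans ?_⟩
  calc #(E ∩ S j) = #((E ∩ S j).map σ.toEmbedding) := (card_map _).symm
    _ ≤ #(E.map σ.toEmbedding ∩ T j) := by
      rw [map_inter]
      exact card_le_card (inter_subset_inter_left fun z hz => by
        obtain ⟨v, hv, rfl⟩ := mem_map.1 hz
        exact h j hv)

lemma card_capturingSets_le_update_swap [DecidableEq ι] {j₀ : ι} {x y : α} (hy : ∀ j, y ∉ S j) :
    #(capturingSets t r S) ≤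
      #(capturingSets t r (update S j₀ ((S j₀).map (Equiv.swap x y).toEmbedding))) := by
  set σ := Equiv.swap x y
  set S' := update S j₀ ((S j₀).map σ.toEmbedding)
  rw [← card_sdiff_le_card_sdiff_iff]
  refine card_le_card_of_injOn (·.map σ.toEmbedding) (fun E hE => ?_) (map_injective _).injOn
  simp only [coe_sdiff, Set.mem_sdiff, mem_coe, mem_capturingSets, not_and, not_exists,
    not_le] at hE ⊢
  obtain ⟨⟨hEr, j, hj⟩, hE'⟩ := hE
  replace hE' := hE' hEr
  have hS'₀ : S' j₀ = (S j₀).map σ.toEmbedding := update_self ..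
  have hS' : ∀ j, j ≠ j₀ → S' j = S j := fun j hj => update_of_ne hj _ _
  have hj₀ : t ≤ #(E ∩ S j₀) := by
    obtain rfl | hne := eq_or_ne j j₀
    · exact hj
    · exact absurd (hS' j hne ▸ hE' j) hj.not_gt
  have hyE : y ∉ E := fun hyE => (hE' j₀).not_ge <| hj₀.trans <| by
    rw [← card_map σ.toEmbedding, hS'₀]
    exact card_le_card (map_swap_inter_subset_inter_map_swap hyE (hy j₀))
  refine ⟨⟨by rw [card_map, hEr], j₀, ?_⟩, fun _ j => ?_⟩
  · rwa [hS'₀, ← map_inter, card_map]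
  obtain rfl | hne := eq_or_ne j j₀
  · calc #(E.map σ.toEmbedding ∩ S j) = #((E ∩ S' j).map σ.toEmbedding) := by
          rw [map_inter, hS'₀, map_swap_map_swap]
      _ < t := by rw [card_map]; exact hE' j
  · exact (card_le_card (map_swap_inter_subset_inter hyE (hy j))).trans_lt (hS' j hne ▸ hE' j)

theorem card_capturingSets_le_of_pairwise_disjoint {s : ℕ}
    (hs : Fintype.card ι * s ≤ Fintype.card α) (hS : ∀ j, #(S j) = s) (hT : ∀ j, #(T j) = s)
    (hTd : Pairwise (Disjoint on T)) : #(capturingSets t r S) ≤ #(capturingSets t r T) := by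
  classical
  induction hN : Fintype.card α - #(univ.biUnion S) using Nat.strong_induction_on
    generalizing S with
  | _ N ih =>
  by_cases hSd : Pairwise (Disjoint on S)
  · obtain ⟨σ, hσ⟩ :=
      exists_perm_mapsTo_of_pairwise_disjoint hSd hTd fun j => (hS j).trans (hT j).symm
    exact card_capturingSets_le_of_mapsTo σ hσ
  obtain ⟨j₀, j₁, hne, hnd⟩ : ∃ j₀ j₁, j₀ ≠ j₁ ∧ ¬Disjoint (S j₀) (S j₁) := by
    simpa [Pairwise] using hSd
  obtain ⟨x, hx₀, hx₁⟩ := not_disjoint_iff.1 hnd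
  have hlt : #(univ.biUnion S) < #(univ : Finset α) := calc
    _ < ∑ j, #(S j) := card_biUnion_lt_sum_card (mem_univ _) (mem_univ _) hne hx₀ hx₁
    _ = Fintype.card ι * s := by simp [hS]
    _ ≤ _ := by rwa [card_univ]
  obtain ⟨y, -, hy⟩ := exists_mem_notMem_of_card_lt_card hlt
  have hyS : ∀ j, y ∉ S j := fun j hj => hy (mem_biUnion.2 ⟨j, mem_univ _, hj⟩)
  have hgrow := card_le_card (insert_biUnion_subset_biUnion_update_swap hne hx₀ hx₁ (hyS j₀))
  rw [card_insert_of_notMem hy] at hgrow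
  refine (card_capturingSets_le_update_swap (j₀ := j₀) (x := x) hyS).trans (ih _ ?_ ?_ rfl)
  · have := card_le_univ (univ.biUnion (update S j₀ ((S j₀).map (Equiv.swap x y).toEmbedding)))
    omega
  · intro j
    obtain rfl | hj := eq_or_ne j j₀
    · rw [update_self, card_map, hS]
    · rw [update_of_ne hj, hS]

end Capturing

theorem stmt_1_general (n r k a i : ℕ)
    (hi : k + 2 * i ≤ n / (a - 1))
    (T T' : Fin (a - 1) → Finset (Fin n))
    (hT : ∀ j, (T j).card = k + 2 * i)
    (hT' : ∀ j, (T' j).card = k + 2 * i)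
    (hdisj : ∀ j₁ j₂, j₁ ≠ j₂ → Disjoint (T' j₁) (T' j₂)) :
    ((Finset.powersetCard r (Finset.univ : Finset (Fin n))).filter
        (fun E => ∃ j, k + i ≤ (E ∩ T j).card)).card ≤
      ((Finset.powersetCard r (Finset.univ : Finset (Fin n))).filter
        (fun E => ∃ j, k + i ≤ (E ∩ T' j).card)).card := by
  have hfit : (a - 1) * (k + 2 * i) ≤ n :=
    (Nat.mul_le_mul_left _ hi).trans (Nat.mul_div_le n (a - 1))
  have h := card_capturingSets_le_of_pairwise_disjoint (t := k + i) (r := r)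
    (by simpa using hfit) hT hT' hdisj
  unfold capturingSets at h
  -- the statement decides `∃ j : Fin _` by a `Fin`-specific instance
  convert h

/-- Among families of `a-1` sets of size `k+2i` in `[n]`, the number of
`r`-sets capturing the family is maximized when the family's members are pairwise disjoint. -/
theorem stmt_1 (n r k a i : ℕ) (hn : r * a ≤ n) (hk : 1 ≤ k) (hkr : k < r) (ha : 1 ≤ a)
    (hi : k + 2 * i ≤ n / (a - 1))
    (T T' : Fin (a - 1) → Finset (Fin n))
    (hT : ∀ j, (T j).card = k + 2 * i)
    (hT' : ∀ j, (T' j).card = k + 2 * i)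
    (hdisj : ∀ j₁ j₂, j₁ ≠ j₂ → Disjoint (T' j₁) (T' j₂)) :
    ((Finset.powersetCard r (Finset.univ : Finset (Fin n))).filter
        (fun E => ∃ j, k + i ≤ (E ∩ T j).card)).card ≤
      ((Finset.powersetCard r (Finset.univ : Finset (Fin n))).filter
        (fun E => ∃ j, k + i ≤ (E ∩ T' j).card)).card :=
  stmt_1_general n r k a i hi T T' hT hT' hdisj
end

section
/- Let $V=[n]$ with $n \ge ra$, $r > k \ge 1$, $a \ge 3$, and $0 \le i \le (\lfloor n/(a-1) \rfloor - k)/2$. Let $\mathcal{T} = \{T_1, \ldots, T_{a-1}\}$ be a family of $(k+2i)$-element subsets of $V$ with $S := T_1 \cap T_2 \ne \emptyset$, let $s = |S|$, let $R$ be an $s$-element subset of $V \setminus (T_1 \cup \cdots \cup T_{a-1})$, and set $T_1^* = (T_1 \setminus S) \cup R$ and $\mathcal{T}^* = \{T_1^*, T_2, \ldots, T_{a-1}\}$. Then the number of $r$-element subsets of $V$ that capture $\mathcal{T}$ but do not capture $\mathcal{T}^*$ is at most the number of $r$-element subsets of $V$ that capture $\mathcal{T}^*$ but do not capture $\mathcal{T}$.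 -/
/-!
Split an `r`-set `E` as `C ∪ A ∪ B` with `C = E \ (S ∪ R)`, `A = E ∩ S`, `B = E ∩ R`. As `R` misses
every `T j` and `S ⊆ T₁`, we have `|E ∩ T₁| = |C ∩ T₁| + |A|` and `|E ∩ T₁*| = |C ∩ T₁| + |B|`,
while for `j ≥ 2` the trace `E ∩ T j` depends on `C ∪ A` alone. So for fixed `C` the sets that
capture `T` but not `T*` with `|A| = x`, `|B| = y` (then `y < x`) number `|𝒜ₓ| · C(s, y)`, where
`𝒜` is the family of those `A ⊆ S` for which `C ∪ A` captures no `T j` with `j ≥ 2`; the sets of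
the reverse kind with `|A| = y`, `|B| = x` number `|𝒜_y| · C(s, x)`. As `𝒜` is a down-set in the
subsets of `S`, the normalized matching property `|𝒜ₓ| / C(s, x) ≤ |𝒜_y| / C(s, y)` of the Boolean
lattice compares the two counts.
-/

open Finset Function

variable {α ι : Type*} [DecidableEq α]

namespace Finset

theorem card_slice_mul_choose_le_of_isLowerSet {S : Finset α} {𝒜 : Finset (Finset α)}
    (h𝒜S : 𝒜 ⊆ S.powerset) (h𝒜 : IsLowerSet (𝒜 : Set (Finset α))) {a b : ℕ} (hba : b ≤ a) :
    #(𝒜.slice a) * (#S).choose b ≤ #(𝒜.slice b) * (#S).choose a := by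
  have hdouble : #(𝒜.slice a) * a.choose b ≤ #(𝒜.slice b) * (#S - b).choose (a - b) := by
    refine card_mul_le_card_mul (fun X Y => Y ⊆ X) (fun X hX => ?_) (fun Y hY => ?_)
    · rw [mem_slice] at hX
      rw [← hX.2, ← card_powersetCard]
      refine card_le_card fun Y hY => ?_
      rw [mem_powersetCard] at hY
      exact (mem_bipartiteAbove _).2 ⟨mem_slice.2 ⟨h𝒜 hY.1 hX.1, hY.2⟩, hY.1⟩
    · rw [mem_slice] at hY
      rw [← hY.2, ← card_filter_powersetCard_subset Y S a (mem_powerset.1 (h𝒜S hY.1)) (hY.2 ▸ hba)]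
      refine card_le_card fun X hX => ?_
      rw [mem_bipartiteBelow, mem_slice] at hX
      exact mem_filter.2 ⟨mem_powersetCard.2 ⟨mem_powerset.1 (h𝒜S hX.1.1), hX.1.2⟩, hX.2⟩
  refine Nat.le_of_mul_le_mul_right ?_ (Nat.choose_pos hba)
  calc #(𝒜.slice a) * (#S).choose b * a.choose b
      = #(𝒜.slice a) * a.choose b * (#S).choose b := by ring
    _ ≤ #(𝒜.slice b) * (#S - b).choose (a - b) * (#S).choose b := by gcongr
    _ = #(𝒜.slice b) * ((#S).choose a * a.choose b) := by rw [Nat.choose_mul hba]; ring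
    _ = #(𝒜.slice b) * (#S).choose a * a.choose b := by ring

theorem card_le_card_of_card_fiber_le {β γ : Type*} [DecidableEq γ] {s t : Finset β}
    (f g : β → γ) (h : ∀ x ∈ s, #{y ∈ s | f y = f x} ≤ #{y ∈ t | g y = f x}) : #s ≤ #t :=
  calc #s = ∑ p ∈ s.image f, #{y ∈ s | f y = p} := card_eq_sum_card_image f s
    _ ≤ ∑ p ∈ s.image f, #{y ∈ t | g y = p} := sum_le_sum fun p hp => by
        obtain ⟨x, hx, rfl⟩ := mem_image.1 hp
        exact h x hx
    _ = #{y ∈ t | g y ∈ s.image f} := sum_card_fiberwise_eq_card_filter _ _ _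
    _ ≤ #t := card_filter_le _ _

section Decomposition

variable {S R C A B E U : Finset α}

theorem sdiff_union_inter_union_inter (S R E : Finset α) :
    E \ (S ∪ R) ∪ E ∩ S ∪ E ∩ R = E := by
  grind

theorem card_sdiff_add_card_inter_add_card_inter (hSR : Disjoint S R) :
    #(E \ (S ∪ R)) + #(E ∩ S) + #(E ∩ R) = #E := by
  rw [← card_union_of_disjoint, ← card_union_of_disjoint, sdiff_union_inter_union_inter] <;>
    grind [disjoint_left]

theorem union_union_sdiff_eq (hC : Disjoint C (S ∪ R)) (hA : A ⊆ S) (hB : B ⊆ R) :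
    (C ∪ A ∪ B) \ (S ∪ R) = C := by
  grind [disjoint_left]

theorem union_union_inter_eq_middle (hC : Disjoint C (S ∪ R)) (hSR : Disjoint S R)
    (hA : A ⊆ S) (hB : B ⊆ R) : (C ∪ A ∪ B) ∩ S = A := by
  grind [disjoint_left]

theorem union_union_inter_eq_right (hC : Disjoint C (S ∪ R)) (hSR : Disjoint S R)
    (hA : A ⊆ S) (hB : B ⊆ R) : (C ∪ A ∪ B) ∩ R = B := by
  grind [disjoint_left]

theorem inter_eq_sdiff_union_inter_inter (hRU : Disjoint R U) :
    E ∩ U = (E \ (S ∪ R) ∪ E ∩ S) ∩ U := by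
  grind [disjoint_left]

theorem card_inter_eq_card_sdiff_inter_add (hSU : S ⊆ U) (hRU : Disjoint R U) :
    #(E ∩ U) = #(E \ (S ∪ R) ∩ U) + #(E ∩ S) := by
  rw [← card_union_of_disjoint]
  · congr 1
    grind [disjoint_left]
  · grind [disjoint_left]

theorem card_inter_sdiff_union_eq_card_sdiff_inter_add (hRU : Disjoint R U) :
    #(E ∩ (U \ S ∪ R)) = #(E \ (S ∪ R) ∩ U) + #(E ∩ R) := by
  rw [← card_union_of_disjoint]
  · congr 1
    grind [disjoint_left]
  · grind [disjoint_left]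

end Decomposition

end Finset

def Captures (t : ℕ) (T : ι → Finset α) (E : Finset α) : Prop := ∃ j, t ≤ #(E ∩ T j)

instance [Fintype ι] (t : ℕ) (T : ι → Finset α) : DecidablePred (Captures t T) :=
  fun _ => inferInstanceAs (Decidable (∃ _, _))

theorem captures_and_not_captures_update_iff [DecidableEq ι] {t : ℕ} {T : ι → Finset α} {j₀ : ι}
    {U E : Finset α} :
    Captures t T E ∧ ¬Captures t (update T j₀ U) E ↔
      (∀ j ≠ j₀, #(E ∩ T j) < t) ∧ t ≤ #(E ∩ T j₀) ∧ #(E ∩ U) < t := by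
  simp only [Captures, not_exists, not_le, update_apply]
  constructor
  · rintro ⟨⟨j, hj⟩, hlt⟩
    refine ⟨fun j' hj' => by simpa [hj'] using hlt j', ?_, by simpa using hlt j₀⟩
    by_contra! h
    have hj₀ : j ≠ j₀ := by rintro rfl; omega
    have := hlt j
    simp only [hj₀, if_false] at this
    omega
  · rintro ⟨hne, h₀, hU⟩
    refine ⟨⟨j₀, h₀⟩, fun j => ?_⟩
    split_ifs with h
    · exact hU
    · exact hne j h

section Swap

variable [Fintype ι] [DecidableEq ι] {t : ℕ} {T : ι → Finset α} {j₀ : ι} {S R E : Finset α}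

def nonCapturing (t : ℕ) (T : ι → Finset α) (j₀ : ι) (S C : Finset α) : Finset (Finset α) :=
  {A ∈ S.powerset | ∀ j ≠ j₀, #((C ∪ A) ∩ T j) < t}

theorem nonCapturing_subset_powerset {C : Finset α} : nonCapturing t T j₀ S C ⊆ S.powerset :=
  filter_subset _ _

theorem isLowerSet_nonCapturing (C : Finset α) :
    IsLowerSet (nonCapturing t T j₀ S C : Set (Finset α)) := by
  intro A B hBA hA
  rw [mem_coe, nonCapturing, mem_filter, mem_powerset] at hA ⊢
  exact ⟨hBA.trans hA.1, fun j hj =>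
    (card_le_card (inter_subset_inter_right (union_subset_union_right hBA))).trans_lt (hA.2 j hj)⟩

theorem captures_and_not_captures_swap_iff (hS : S ⊆ T j₀) (hRT : ∀ j, Disjoint R (T j)) :
    Captures t T E ∧ ¬Captures t (update T j₀ (T j₀ \ S ∪ R)) E ↔
      E ∩ S ∈ nonCapturing t T j₀ S (E \ (S ∪ R)) ∧
        t ≤ #(E \ (S ∪ R) ∩ T j₀) + #(E ∩ S) ∧ #(E \ (S ∪ R) ∩ T j₀) + #(E ∩ R) < t := by
  rw [captures_and_not_captures_update_iff, card_inter_eq_card_sdiff_inter_add hS (hRT j₀),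
    card_inter_sdiff_union_eq_card_sdiff_inter_add (hRT j₀), nonCapturing, mem_filter,
    mem_powerset]
  simp only [inter_subset_right, true_and, ← inter_eq_sdiff_union_inter_inter (hRT _)]

theorem captures_swap_and_not_captures_iff (hS : S ⊆ T j₀) (hRT : ∀ j, Disjoint R (T j)) :
    Captures t (update T j₀ (T j₀ \ S ∪ R)) E ∧ ¬Captures t T E ↔
      E ∩ S ∈ nonCapturing t T j₀ S (E \ (S ∪ R)) ∧
        t ≤ #(E \ (S ∪ R) ∩ T j₀) + #(E ∩ R) ∧ #(E \ (S ∪ R) ∩ T j₀) + #(E ∩ S) < t := by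
  have h := captures_and_not_captures_update_iff (t := t) (T := update T j₀ (T j₀ \ S ∪ R))
    (j₀ := j₀) (U := T j₀) (E := E)
  rw [update_idem, update_eq_self, update_self] at h
  rw [h, card_inter_eq_card_sdiff_inter_add hS (hRT j₀),
    card_inter_sdiff_union_eq_card_sdiff_inter_add (hRT j₀), nonCapturing, mem_filter,
    mem_powerset]
  simp +contextual only [ne_eq, not_false_eq_true, update_of_ne, inter_subset_right, true_and,
    ← inter_eq_sdiff_union_inter_inter (hRT _)]

variable [Fintype α] {r : ℕ}

theorem card_fiber_captures_and_not_captures_swap_le_mul_choose (hS : S ⊆ T j₀) (hR : #R = #S)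
    (hRT : ∀ j, Disjoint R (T j)) (C : Finset α) (x : ℕ) :
    #{E ∈ powersetCard r univ | (Captures t T E ∧ ¬Captures t (update T j₀ (T j₀ \ S ∪ R)) E) ∧
        (E \ (S ∪ R), #(E ∩ S)) = (C, x)} ≤
      #((nonCapturing t T j₀ S C).slice x) * (#S).choose (r - #C - x) := by
  have hSR : Disjoint S R := (hRT j₀).symm.mono_left hS
  calc _ ≤ #((nonCapturing t T j₀ S C).slice x ×ˢ R.powersetCard (r - #C - x)) := by
        refine card_le_card_of_injOn (fun E => (E ∩ S, E ∩ R)) (fun E hE => ?_) ?_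
        · simp only [mem_coe, mem_filter, mem_powersetCard_univ, Prod.mk.injEq] at hE
          obtain ⟨hr, hcap, rfl, rfl⟩ := hE
          have hcard := card_sdiff_add_card_inter_add_card_inter (E := E) hSR
          rw [captures_and_not_captures_swap_iff hS hRT] at hcap
          simp only [mem_coe, mem_product, mem_slice, mem_powersetCard]
          exact ⟨⟨hcap.1, trivial⟩, inter_subset_right, by omega⟩
        · intro E hE E' hE' h
          simp only [mem_coe, mem_filter, Prod.mk.injEq] at hE hE' h
          rw [← sdiff_union_inter_union_inter S R E, ← sdiff_union_inter_union_inter S R E',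
            hE.2.2.1, hE'.2.2.1, h.1, h.2]
    _ = _ := by rw [card_product, card_powersetCard, hR]

theorem mul_choose_le_card_fiber_captures_swap_and_not_captures (hS : S ⊆ T j₀) (hR : #R = #S)
    (hRT : ∀ j, Disjoint R (T j)) {C : Finset α} {x y : ℕ} (hC : Disjoint C (S ∪ R))
    (hr : #C + y + x = r) (hx : t ≤ #(C ∩ T j₀) + x) (hy : #(C ∩ T j₀) + y < t) :
    #((nonCapturing t T j₀ S C).slice y) * (#S).choose x ≤
      #{E ∈ powersetCard r univ | (Captures t (update T j₀ (T j₀ \ S ∪ R)) E ∧ ¬Captures t T E) ∧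
        (E \ (S ∪ R), #(E ∩ R)) = (C, x)} := by
  have hSR : Disjoint S R := (hRT j₀).symm.mono_left hS
  calc _ = #((nonCapturing t T j₀ S C).slice y ×ˢ R.powersetCard x) := by
        rw [card_product, card_powersetCard, hR]
    _ ≤ _ := by
        refine card_le_card_of_injOn (fun p => C ∪ p.1 ∪ p.2) (fun p hp => ?_) ?_
        · simp only [coe_product, Set.mem_prod, mem_coe, mem_slice, mem_powersetCard] at hp
          obtain ⟨⟨hA, rfl⟩, hB, rfl⟩ := hp
          have hAS := mem_powerset.1 (nonCapturing_subset_powerset hA)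
          have hcard := card_sdiff_add_card_inter_add_card_inter (E := C ∪ p.1 ∪ p.2) hSR
          simp only [mem_coe, mem_filter, mem_powersetCard_univ, Prod.mk.injEq,
            captures_swap_and_not_captures_iff hS hRT, union_union_sdiff_eq hC hAS hB,
            union_union_inter_eq_middle hC hSR hAS hB,
            union_union_inter_eq_right hC hSR hAS hB] at hcard ⊢
          exact ⟨by omega, ⟨hA, hx, hy⟩, trivial, trivial⟩
        · rintro ⟨A, B⟩ hp ⟨A', B'⟩ hp' h
          simp only [coe_product, Set.mem_prod, mem_coe, mem_slice, mem_powersetCard] at hp hp'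
          have hAS := mem_powerset.1 (nonCapturing_subset_powerset hp.1.1)
          have hA'S := mem_powerset.1 (nonCapturing_subset_powerset hp'.1.1)
          refine Prod.ext ?_ ?_
          · simpa only [union_union_inter_eq_middle hC hSR hAS hp.2.1,
              union_union_inter_eq_middle hC hSR hA'S hp'.2.1] using congrArg (· ∩ S) h
          · simpa only [union_union_inter_eq_right hC hSR hAS hp.2.1,
              union_union_inter_eq_right hC hSR hA'S hp'.2.1] using congrArg (· ∩ R) h

theorem card_fiber_captures_and_not_captures_swap_le_card_fiber (hS : S ⊆ T j₀) (hR : #R = #S)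
    (hRT : ∀ j, Disjoint R (T j)) (hr : #E = r)
    (hE : Captures t T E ∧ ¬Captures t (update T j₀ (T j₀ \ S ∪ R)) E) :
    #{F ∈ powersetCard r univ | (Captures t T F ∧ ¬Captures t (update T j₀ (T j₀ \ S ∪ R)) F) ∧
        (F \ (S ∪ R), #(F ∩ S)) = (E \ (S ∪ R), #(E ∩ S))} ≤
      #{F ∈ powersetCard r univ | (Captures t (update T j₀ (T j₀ \ S ∪ R)) F ∧ ¬Captures t T F) ∧
        (F \ (S ∪ R), #(F ∩ R)) = (E \ (S ∪ R), #(E ∩ S))} := by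
  rw [captures_and_not_captures_swap_iff hS hRT] at hE
  have hcard := card_sdiff_add_card_inter_add_card_inter (E := E) ((hRT j₀).symm.mono_left hS)
  calc _ ≤ _ := card_fiber_captures_and_not_captures_swap_le_mul_choose hS hR hRT _ _
    _ = #((nonCapturing t T j₀ S (E \ (S ∪ R))).slice #(E ∩ S)) * (#S).choose #(E ∩ R) := by
        rw [← hr, ← hcard]
        congr 2
        omega
    _ ≤ #((nonCapturing t T j₀ S (E \ (S ∪ R))).slice #(E ∩ R)) * (#S).choose #(E ∩ S) :=
        card_slice_mul_choose_le_of_isLowerSet nonCapturing_subset_powerset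
          (isLowerSet_nonCapturing _) (by omega)
    _ ≤ _ := mul_choose_le_card_fiber_captures_swap_and_not_captures hS hR hRT sdiff_disjoint
        (by omega) hE.2.1 hE.2.2

theorem card_captures_and_not_captures_swap_le (hS : S ⊆ T j₀) (hR : #R = #S)
    (hRT : ∀ j, Disjoint R (T j)) :
    #{E ∈ powersetCard r univ | Captures t T E ∧ ¬Captures t (update T j₀ (T j₀ \ S ∪ R)) E} ≤
      #{E ∈ powersetCard r univ | Captures t (update T j₀ (T j₀ \ S ∪ R)) E ∧ ¬Captures t T E} :=
  card_le_card_of_card_fiber_le (fun E => (E \ (S ∪ R), #(E ∩ S)))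
    (fun E => (E \ (S ∪ R), #(E ∩ R))) fun E hE => by
      rw [mem_filter, mem_powersetCard_univ] at hE
      simpa only [filter_filter] using
        card_fiber_captures_and_not_captures_swap_le_card_fiber hS hR hRT hE.1 hE.2

end Swap

/-- Replacing `T₁` by `T₁* = (T₁ \ S) ∪ R`, where `S = T₁ ∩ T₂ ≠ ∅` and `R`
is a fresh `|S|`-set, the number of `r`-sets capturing `T` but not `T*` is at most the number
of `r`-sets capturing `T*` but not `T`. -/
theorem stmt_2 (n r k a i : ℕ) (ha : 3 ≤ a)
    (T : Fin (a - 1) → Finset (Fin n))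
    (S R : Finset (Fin n))
    (hS : S = T ⟨0, by omega⟩ ∩ T ⟨1, by omega⟩)
    (hR : R.card = S.card)
    (hRdisj : ∀ j, Disjoint R (T j))
    (Tstar : Fin (a - 1) → Finset (Fin n))
    (hTstar : Tstar = Function.update T ⟨0, by omega⟩ ((T ⟨0, by omega⟩ \ S) ∪ R)) :
    ((Finset.powersetCard r (Finset.univ : Finset (Fin n))).filter
        (fun E => (∃ j, k + i ≤ (E ∩ T j).card) ∧ ¬ (∃ j, k + i ≤ (E ∩ Tstar j).card))).card ≤
      ((Finset.powersetCard r (Finset.univ : Finset (Fin n))).filter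
        (fun E => (∃ j, k + i ≤ (E ∩ Tstar j).card) ∧ ¬ (∃ j, k + i ≤ (E ∩ T j).card))).card := by
  subst hTstar
  have hS₀ : S ⊆ T ⟨0, by omega⟩ := hS ▸ inter_subset_left
  -- `convert` bridges the decidability instances of the two filters
  convert card_captures_and_not_captures_swap_le (t := k + i) (r := r) hS₀ hR hRdisj using 4 <;> rfl
end

section
/- For every integer $r \ge 2$ there exists a constant $c_r$, depending only on $r$, such that for all integers $a \ge 1$ and $n > c_r \cdot a$, every $r$-uniform hypergraph $\mathcal{H}$ on $n$ vertices with matching number $\nu(\mathcal{H}) < a$ has at most $\binom{n}{r} - \binom{n-(a-1)}{r}$ edges, i.e., at most as many edges as the $r$-uniform hypergraph whose edges are all $r$-sets meeting a fixed set of $a-1$ vertices. -/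
/-!
Erdős's argument, by induction on the bound `s ≥ ν(E)`. If some vertex `v` lies in more than
`r (s+1) C(n-2, r-2)` edges, deleting `v` lowers the matching number: a matching of `s+1` edges
avoiding `v` covers at most `r (s+1)` vertices, each of which lies in at most `C(n-2, r-2)` edges
through `v`, so some edge through `v` extends the matching. Pascal's rule then carries the bound
from `n - 1` vertices to `n`. Otherwise all degrees are small, and since the vertex set of a
maximal matching meets every edge, `|E| ≤ r²(s+1)² C(n-2, r-2)`, which for
`n > 2^r r³ (s+1)` is below `(s+1) C(n-s-1, r-1) ≤ C(n, r) - C(n-s-1, r)`.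
-/

open Finset

namespace Nat

lemma choose_add_mul_choose_le (m k : ℕ) :
    ∀ t, m.choose (k + 1) + t * m.choose k ≤ (m + t).choose (k + 1)
  | 0 => by simp
  | t + 1 => by
    have ih := choose_add_mul_choose_le m k t
    have hmono := choose_le_choose k (m.le_add_right t)
    rw [← add_assoc, choose_succ_succ']
    linarith

lemma choose_le_two_pow_mul_choose {m m' k : ℕ} (h : m ≤ 2 * (m' + 1 - k)) :
    m.choose k ≤ 2 ^ k * m'.choose k := by
  have key : m.descFactorial k ≤ 2 ^ k * m'.descFactorial k := calc
    m.descFactorial k ≤ m ^ k := descFactorial_le_pow m k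
    _ ≤ (2 * (m' + 1 - k)) ^ k := Nat.pow_le_pow_left h k
    _ = 2 ^ k * (m' + 1 - k) ^ k := mul_pow ..
    _ ≤ 2 ^ k * m'.descFactorial k := Nat.mul_le_mul_left _ (pow_sub_le_descFactorial m' k)
  rw [descFactorial_eq_factorial_mul_choose, descFactorial_eq_factorial_mul_choose,
    mul_left_comm] at key
  exact Nat.le_of_mul_le_mul_left key (factorial_pos k)

lemma sq_mul_choose_le_choose {r t n : ℕ} (hr : 2 ≤ r) (hn : 2 ^ r * r ^ 3 * (t + 1) < n) :
    r ^ 2 * t * (n - 2).choose (r - 2) ≤ (n - t).choose (r - 1) := by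
  obtain ⟨k, rfl⟩ : ∃ k, r = k + 2 := ⟨r - 2, by omega⟩
  rw [Nat.add_sub_cancel, show k + 2 - 1 = k + 1 by omega]
  set X := 2 ^ k * (k + 2) ^ 3
  have hX : 2 ^ (k + 2) * (k + 2) ^ 3 * (t + 1) = 4 * (X * t) + 4 * X := by ring
  have hkX : k + 2 ≤ X := calc
    k + 2 ≤ (k + 2) ^ 3 := Nat.le_self_pow (by norm_num) _
    _ ≤ X := Nat.le_mul_of_pos_left _ (by positivity)
  have htX : t ≤ X * t := Nat.le_mul_of_pos_left t (by omega)
  have hcoef : (k + 1) * (k + 2) ^ 2 * t * 2 ^ k ≤ X * t := by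
    have : (k + 1) * (k + 2) ^ 2 ≤ (k + 2) ^ 3 := by nlinarith
    calc (k + 1) * (k + 2) ^ 2 * t * 2 ^ k ≤ (k + 2) ^ 3 * t * 2 ^ k := by gcongr
      _ = X * t := by ring
  -- compare both sides with `C(n-t, k)`, using `C(n-t, k+1) (k+1) = C(n-t, k) (n-t-k)`
  refine Nat.le_of_mul_le_mul_right (c := k + 1) ?_ k.succ_pos
  calc (k + 2) ^ 2 * t * (n - 2).choose k * (k + 1)
      ≤ (k + 2) ^ 2 * t * (2 ^ k * (n - t).choose k) * (k + 1) := by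
        gcongr
        exact choose_le_two_pow_mul_choose (by omega)
    _ = (k + 1) * (k + 2) ^ 2 * t * 2 ^ k * (n - t).choose k := by ring
    _ ≤ (n - t - k) * (n - t).choose k := by gcongr; omega
    _ = (n - t).choose (k + 1) * (k + 1) := by rw [choose_succ_right_eq]; ring

lemma mul_mul_choose_le_choose_sub_choose {r t n : ℕ} (hr : 2 ≤ r)
    (hn : 2 ^ r * r ^ 3 * (t + 1) < n) :
    r * t * (r * t * (n - 2).choose (r - 2)) ≤ n.choose r - (n - t).choose r := by
  have htn : t ≤ n := by
    have : t + 1 ≤ 2 ^ r * r ^ 3 * (t + 1) := Nat.le_mul_of_pos_left _ (by positivity)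
    omega
  have hpascal := choose_add_mul_choose_le (n - t) (r - 1) t
  rw [Nat.sub_add_cancel (by omega : 1 ≤ r), Nat.sub_add_cancel htn] at hpascal
  calc r * t * (r * t * (n - 2).choose (r - 2)) = t * (r ^ 2 * t * (n - 2).choose (r - 2)) := by
        ring
    _ ≤ t * (n - t).choose (r - 1) := Nat.mul_le_mul_left _ (sq_mul_choose_le_choose hr hn)
    _ ≤ n.choose r - (n - t).choose r := Nat.le_sub_of_add_le (by linarith)

lemma choose_pred_add_choose_pred_sub {n r : ℕ} (hn : 0 < n) (hr : 0 < r) (s : ℕ) :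
    (n - 1).choose (r - 1) + ((n - 1).choose r - (n - 1 - s).choose r) =
      n.choose r - (n - (s + 1)).choose r := by
  obtain ⟨m, rfl⟩ : ∃ m, n = m + 1 := ⟨n - 1, by omega⟩
  obtain ⟨k, rfl⟩ : ∃ k, r = k + 1 := ⟨r - 1, by omega⟩
  have hmono := choose_le_choose (k + 1) (m.sub_le s)
  simp only [Nat.add_sub_cancel, choose_succ_succ', show m + 1 - (s + 1) = m - s by omega]
  omega

end Nat

variable {α : Type*}

-- `MatchingNumberLE E s` says `ν(E) ≤ s`.
def MatchingNumberLE (E : Finset (Finset α)) (s : ℕ) : Prop :=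
  ∀ M ⊆ E, (M : Set (Finset α)).PairwiseDisjoint id → #M ≤ s

lemma MatchingNumberLE.eq_empty {E : Finset (Finset α)} (hν : MatchingNumberLE E 0) : E = ∅ :=
  eq_empty_of_forall_notMem fun e he => by
    simpa using hν {e} (singleton_subset_iff.2 he) (by simp)

variable [DecidableEq α] {r s : ℕ} {V : Finset α} {E M : Finset (Finset α)}

lemma MatchingNumberLE.not_disjoint_biUnion (hν : MatchingNumberLE E s) (hME : M ⊆ E)
    (hM : (M : Set (Finset α)).PairwiseDisjoint id) (hMs : #M = s) {e : Finset α} (he : e ∈ E)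
    (hne : e.Nonempty) : ¬Disjoint e (M.biUnion id) := by
  intro hdisj
  have heM : e ∉ M := fun h =>
    hne.ne_empty (disjoint_self.1 (hdisj.mono_right (subset_biUnion_of_mem id h)))
  have hbig := hν (insert e M) (insert_subset he hME) <| by
    rw [coe_insert]
    exact hM.insert fun f hf _ => hdisj.mono_right (subset_biUnion_of_mem id hf)
  rw [card_insert_of_notMem heM] at hbig
  omega

lemma exists_matching_forall_not_disjoint_biUnion (hE : ∀ e ∈ E, e.Nonempty) :
    ∃ M ⊆ E, (M : Set (Finset α)).PairwiseDisjoint id ∧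
      ∀ e ∈ E, ¬Disjoint e (M.biUnion id) := by
  classical
  obtain ⟨M, hM, hmax⟩ := exists_max_image
    (E.powerset.filter fun M : Finset (Finset α) => (M : Set (Finset α)).PairwiseDisjoint id)
    card ⟨∅, by simp⟩
  rw [mem_filter, mem_powerset] at hM
  have hν : MatchingNumberLE E #M := fun M' hM'E hM' => hmax M' (by simp [hM'E, hM'])
  exact ⟨M, hM.1, hM.2, fun e he => hν.not_disjoint_biUnion hM.1 hM.2 rfl he (hE e he)⟩

lemma card_filter_not_disjoint_le {F : Finset (Finset α)} {T : Finset α} {d : ℕ}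
    (hd : ∀ u ∈ T, #{e ∈ F | u ∈ e} ≤ d) : #{e ∈ F | ¬Disjoint e T} ≤ #T * d := by
  refine (card_le_card fun e he => ?_).trans (card_biUnion_le_card_mul _ _ _ hd)
  obtain ⟨heF, heT⟩ := mem_filter.1 he
  obtain ⟨u, hue, huT⟩ := not_disjoint_iff.1 heT
  exact mem_biUnion.2 ⟨u, huT, mem_filter.2 ⟨heF, hue⟩⟩

lemma card_biUnion_le_mul_of_subset_powersetCard (hM : M ⊆ V.powersetCard r) :
    #(M.biUnion id) ≤ #M * r :=
  card_biUnion_le_card_mul _ _ _ fun _ he => (mem_powersetCard.1 (hM he)).2.le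

lemma biUnion_subset_of_subset_powersetCard (hM : M ⊆ V.powersetCard r) : M.biUnion id ⊆ V :=
  biUnion_subset.2 fun _ he => (mem_powersetCard.1 (hM he)).1

lemma card_le_mul_of_card_filter_mem_le (hE : E ⊆ V.powersetCard r) (hr : 0 < r)
    (hν : MatchingNumberLE E s) {d : ℕ} (hd : ∀ v ∈ V, #{e ∈ E | v ∈ e} ≤ d) :
    #E ≤ r * s * d := by
  obtain ⟨M, hME, hM, hcover⟩ := exists_matching_forall_not_disjoint_biUnion fun e he =>
    card_pos.1 ((mem_powersetCard.1 (hE he)).2 ▸ hr)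
  have hMs := hν M hME hM
  calc #E = #{e ∈ E | ¬Disjoint e (M.biUnion id)} := (filter_true_of_mem hcover).symm ▸ rfl
    _ ≤ #(M.biUnion id) * d := card_filter_not_disjoint_le fun u hu =>
        hd u (biUnion_subset_of_subset_powersetCard (hME.trans hE) hu)
    _ ≤ r * s * d := by
        gcongr
        exact (card_biUnion_le_mul_of_subset_powersetCard (hME.trans hE)).trans
          (by rw [mul_comm]; gcongr)

lemma card_filter_subset_le_choose (hE : E ⊆ V.powersetCard r) {S : Finset α} (hS : S ⊆ V)
    (hSr : #S ≤ r) : #{e ∈ E | S ⊆ e} ≤ (#V - #S).choose (r - #S) :=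
  card_filter_powersetCard_subset S V r hS hSr ▸ card_le_card (filter_subset_filter _ hE)

lemma card_filter_mem_le_choose (hE : E ⊆ V.powersetCard r) (hr : 1 ≤ r) {v : α}
    (hv : v ∈ V) :
    #{e ∈ E | v ∈ e} ≤ (#V - 1).choose (r - 1) := by
  simpa using card_filter_subset_le_choose hE (singleton_subset_iff.2 hv) (by simpa using hr)

lemma card_filter_mem_filter_mem_le_choose (hE : E ⊆ V.powersetCard r) (hr : 2 ≤ r) {u v : α}
    (hu : u ∈ V) (hv : v ∈ V) (huv : u ≠ v) :
    #{e ∈ {e ∈ E | v ∈ e} | u ∈ e} ≤ (#V - 2).choose (r - 2) := by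
  have hS : ({u, v} : Finset α) ⊆ V := insert_subset hu (singleton_subset_iff.2 hv)
  have hcard : #({u, v} : Finset α) = 2 := card_pair huv
  refine le_trans (card_le_card fun e he => ?_)
    (hcard ▸ card_filter_subset_le_choose hE hS (hcard ▸ hr))
  simp only [mem_filter] at he ⊢
  exact ⟨he.1.1, insert_subset he.2 (singleton_subset_iff.2 he.1.2)⟩

lemma MatchingNumberLE.filter_notMem (hE : E ⊆ V.powersetCard r) (hr : 2 ≤ r)
    (hν : MatchingNumberLE E (s + 1)) {v : α} (hv : v ∈ V)
    (hdeg : r * (s + 1) * (#V - 2).choose (r - 2) < #{e ∈ E | v ∈ e}) :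
    MatchingNumberLE {e ∈ E | v ∉ e} s := by
  intro M hME hM
  have hMs := hν M (hME.trans (filter_subset _ _)) hM
  by_contra! hlt
  have hMV : M ⊆ V.powersetCard r := hME.trans ((filter_subset _ _).trans hE)
  set T := M.biUnion id
  have hvT : v ∉ T := by
    simp only [T, mem_biUnion, id, not_exists, not_and]
    exact fun f hf => (mem_filter.1 (hME hf)).2
  have hmeet :
      #{e ∈ {e ∈ E | v ∈ e} | ¬Disjoint e T} ≤ r * (s + 1) * (#V - 2).choose (r - 2) :=
    calc _ ≤ #T * (#V - 2).choose (r - 2) := card_filter_not_disjoint_le fun u hu =>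
          card_filter_mem_filter_mem_le_choose hE hr (biUnion_subset_of_subset_powersetCard hMV hu)
            hv (ne_of_mem_of_not_mem hu hvT)
      _ ≤ r * (s + 1) * (#V - 2).choose (r - 2) := by
          gcongr
          exact (card_biUnion_le_mul_of_subset_powersetCard hMV).trans (by rw [mul_comm]; gcongr)
  obtain ⟨e, he, heT⟩ : ∃ e ∈ {e ∈ E | v ∈ e}, Disjoint e T := by
    by_contra! hall
    rw [filter_true_of_mem hall] at hmeet
    omega
  obtain ⟨heE, hve⟩ := mem_filter.1 he
  exact hν.not_disjoint_biUnion (hME.trans (filter_subset _ _)) hM (by omega) heE ⟨v, hve⟩ heT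

theorem card_le_choose_sub_choose_of_matchingNumberLE (hr : 2 ≤ r)
    (hE : E ⊆ V.powersetCard r) (hν : MatchingNumberLE E s)
    (hV : 2 ^ r * r ^ 3 * (s + 1) < #V) : #E ≤ (#V).choose r - (#V - s).choose r := by
  induction s generalizing V E with
  | zero => simp [hν.eq_empty]
  | succ s ih =>
    by_cases hdeg : ∃ v ∈ V, r * (s + 1) * (#V - 2).choose (r - 2) < #{e ∈ E | v ∈ e}
    · obtain ⟨v, hv, hdeg⟩ := hdeg
      have hE' : {e ∈ E | v ∉ e} ⊆ (V.erase v).powersetCard r := fun e he => by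
        obtain ⟨heE, hve⟩ := mem_filter.1 he
        obtain ⟨heV, her⟩ := mem_powersetCard.1 (hE heE)
        exact mem_powersetCard.2 ⟨subset_erase.2 ⟨heV, hve⟩, her⟩
      have hV' : 2 ^ r * r ^ 3 * (s + 1) < #(V.erase v) := by
        rw [card_erase_of_mem hv]
        rw [mul_add_one] at hV
        have : 0 < 2 ^ r * r ^ 3 := by positivity
        omega
      have hrest := ih hE' (hν.filter_notMem hE hr hv hdeg) hV'
      rw [card_erase_of_mem hv] at hrest
      calc #E = #{e ∈ E | v ∈ e} + #{e ∈ E | v ∉ e} :=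
            (card_filter_add_card_filter_not _).symm
        _ ≤ (#V - 1).choose (r - 1) + ((#V - 1).choose r - (#V - 1 - s).choose r) :=
            add_le_add (card_filter_mem_le_choose hE (by omega) hv) hrest
        _ = (#V).choose r - (#V - (s + 1)).choose r :=
            Nat.choose_pred_add_choose_pred_sub (card_pos.2 ⟨v, hv⟩) (by omega) s
    · push Not at hdeg
      calc #E ≤ r * (s + 1) * (r * (s + 1) * (#V - 2).choose (r - 2)) :=
            card_le_mul_of_card_filter_mem_le hE (by omega) hν hdeg
        _ ≤ (#V).choose r - (#V - (s + 1)).choose r :=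
            Nat.mul_mul_choose_le_choose_sub_choose hr hV

/-- Erdős. For every `r ≥ 2` there is a constant `c_r` such that for all
`a ≥ 1` and `n > c_r · a`, every `r`-uniform hypergraph on `n` vertices with matching number
less than `a` has at most `C(n,r) - C(n-(a-1), r)` edges. -/
theorem stmt_7 (r : ℕ) (hr : 2 ≤ r) :
    ∃ c : ℕ, ∀ a n : ℕ, 1 ≤ a → c * a < n →
      ∀ E : Finset (Finset (Fin n)),
        (∀ e ∈ E, e.card = r) →
        (∀ M ⊆ E, (∀ e₁ ∈ M, ∀ e₂ ∈ M, e₁ ≠ e₂ → Disjoint e₁ e₂) → M.card < a) →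
        E.card ≤ n.choose r - (n - (a - 1)).choose r := by
  refine ⟨2 ^ r * r ^ 3, fun a n ha hn E hEr hEν => ?_⟩
  obtain ⟨s, rfl⟩ : ∃ s, a = s + 1 := ⟨a - 1, by omega⟩
  have hE : E ⊆ (univ : Finset (Fin n)).powersetCard r := fun e he =>
    mem_powersetCard.2 ⟨subset_univ e, hEr e he⟩
  have hν : MatchingNumberLE E s := fun M hME hM =>
    Nat.lt_succ_iff.1 (hEν M hME fun _ h₁ _ h₂ hne => hM h₁ h₂ hne)
  simpa using card_le_choose_sub_choose_of_matchingNumberLE hr hE hν (by simpa using hn)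
end

section
/- Let $r, k, a, n$ be positive integers with $r > k \ge 1$, $a \ge 2$ and $n \ge ra$. Then $g(n,r,k,a) \ge (a-1)\binom{n-(a-1)k}{r-k}$, where $g(n,r,k,a) = \sum_{j=1}^{\min\{a-1, \lfloor r/k \rfloor\}} (-1)^{j-1}\binom{a-1}{j}\binom{n-jk}{r-jk}$. -/
/-!
Put `b = a - 1`, `A = (1 + x)^k` and `Q = A - x^k`. By the binomial theorem the alternating sum
is the coefficient of `x^r` in `(1 + x)^(n - bk) (A^b - Q^b)`, and
`A^b - Q^b = x^k ∑_{i<b} A^i Q^(b-1-i)`. Every factor has nonnegative coefficients, and the sum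
has constant term `b`, so the coefficient of `x^r` is at least `b` times the coefficient of
`x^(r-k)` in `(1 + x)^(n - bk)`.
-/

open Polynomial Finset

namespace Polynomial

section NonnegCoeffs

variable (R : Type*) [Semiring R] [PartialOrder R] [IsOrderedRing R]

def nonnegCoeffs : Subsemiring R[X] where
  carrier := {p | ∀ n, 0 ≤ p.coeff n}
  mul_mem' {p q} hp hq n := by
    rw [coeff_mul]
    exact sum_nonneg fun i _ => mul_nonneg (hp _) (hq _)
  one_mem' n := by
    rw [coeff_one]
    split_ifs <;> simp
  add_mem' hp hq n := by
    rw [coeff_add]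
    exact add_nonneg (hp n) (hq n)
  zero_mem' n := by simp

variable {R}

theorem X_mem_nonnegCoeffs : (X : R[X]) ∈ nonnegCoeffs R := fun n => by
  rw [coeff_X]
  split_ifs <;> simp

theorem coeff_mul_coeff_le_coeff_mul {p q : R[X]} (hp : p ∈ nonnegCoeffs R)
    (hq : q ∈ nonnegCoeffs R) (u v : ℕ) : p.coeff u * q.coeff v ≤ (p * q).coeff (u + v) := by
  rw [coeff_mul]
  exact single_le_sum (f := fun x : ℕ × ℕ => p.coeff x.1 * q.coeff x.2)
    (fun _ _ => mul_nonneg (hp _) (hq _)) (a := (u, v)) (mem_antidiagonal.2 rfl)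

end NonnegCoeffs

section

variable {R : Type*} [CommRing R]

theorem X_add_one_pow_sub_X_pow_mem_nonnegCoeffs [PartialOrder R] [IsOrderedRing R] (k : ℕ) :
    ((X + 1 : R[X]) ^ k - X ^ k) ∈ nonnegCoeffs R := fun m => by
  rw [coeff_sub, coeff_X_add_one_pow, coeff_X_pow]
  split_ifs with h
  · simp [h]
  · simp

theorem eval_zero_X_add_one_pow_sub_X_pow {k : ℕ} (hk : k ≠ 0) :
    ((X + 1 : R[X]) ^ k - X ^ k).eval 0 = 1 := by
  simp [hk]

theorem coeff_X_add_one_pow_mul_sub_pow {n b k : ℕ} (hbk : b * k ≤ n) (r : ℕ) :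
    ((X + 1 : R[X]) ^ (n - b * k) * ((X + 1) ^ k - X ^ k) ^ b).coeff r =
      ∑ j ∈ range (b + 1), (-1) ^ j * (b.choose j : R) *
        if j * k ≤ r then ((n - j * k).choose (r - j * k) : R) else 0 := by
  rw [sub_eq_neg_add, add_pow (-X ^ k), mul_sum, finsetSum_coeff]
  refine sum_congr rfl fun j hj => ?_
  have hjb : j * k ≤ b * k := Nat.mul_le_mul_right k (by simpa [Nat.lt_succ_iff] using hj)
  have hexp : n - b * k + k * (b - j) = n - j * k := by
    rw [Nat.mul_sub, mul_comm k b, mul_comm k j]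
    omega
  have hterm : (X + 1 : R[X]) ^ (n - b * k) * ((-X ^ k) ^ j * ((X + 1) ^ k) ^ (b - j) *
      (b.choose j : R[X])) =
        C ((-1) ^ j * (b.choose j : R)) * ((X + 1) ^ (n - j * k) * X ^ (j * k)) := by
    rw [← hexp, neg_pow, pow_add, ← pow_mul, ← pow_mul, mul_comm j k]
    simp only [map_mul, map_pow, map_neg, map_one, map_natCast]
    ring
  rw [hterm, coeff_C_mul, coeff_mul_X_pow', coeff_X_add_one_pow]

theorem le_coeff_X_add_one_pow_sub [PartialOrder R] [IsOrderedRing R] {n b k r : ℕ} (hk : k ≠ 0)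
    (hkr : k ≤ r) (hbk : b * k ≤ n) :
    (b : R) * ((n - b * k).choose (r - k) : R) ≤
      ((X + 1 : R[X]) ^ n - (X + 1) ^ (n - b * k) * ((X + 1) ^ k - X ^ k) ^ b).coeff r := by
  set A : R[X] := (X + 1) ^ k
  set Q : R[X] := A - X ^ k
  set S : R[X] := ∑ i ∈ range b, A ^ i * Q ^ (b - 1 - i)
  have hX1 : (X + 1 : R[X]) ∈ nonnegCoeffs R := add_mem X_mem_nonnegCoeffs (one_mem _)
  have hS : S ∈ nonnegCoeffs R := sum_mem fun i _ =>
    mul_mem (pow_mem (pow_mem hX1 k) i) (pow_mem (X_add_one_pow_sub_X_pow_mem_nonnegCoeffs k) _)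
  have hS0 : S.coeff 0 = b := by
    simp [S, Q, A, coeff_zero_eq_eval_zero, eval_finsetSum, eval_zero_X_add_one_pow_sub_X_pow hk]
  have hfactor : (X + 1 : R[X]) ^ n - (X + 1) ^ (n - b * k) * Q ^ b =
      (X + 1) ^ (n - b * k) * S * X ^ k := by
    have hsplit : (X + 1 : R[X]) ^ n = (X + 1) ^ (n - b * k) * A ^ b := by
      rw [← pow_mul, ← pow_add, mul_comm k b, Nat.sub_add_cancel hbk]
    rw [hsplit, ← mul_sub, ← geom_sum₂_mul, sub_sub_cancel, mul_assoc]
  calc (b : R) * ((n - b * k).choose (r - k) : R)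
      = ((X + 1 : R[X]) ^ (n - b * k)).coeff (r - k) * S.coeff 0 := by
        rw [hS0, coeff_X_add_one_pow, mul_comm]
    _ ≤ ((X + 1) ^ (n - b * k) * S).coeff (r - k + 0) :=
        coeff_mul_coeff_le_coeff_mul (pow_mem hX1 _) hS _ _
    _ = _ := by rw [hfactor, coeff_mul_X_pow', if_pos hkr, add_zero]

/-- The cap `r / k` matters: for `j * k > r` the truncated `(n - j * k).choose (r - j * k)`
is `1`. -/
theorem sum_Icc_min_div_eq {b k : ℕ} (hk : 0 < k) (n r : ℕ) :
    ∑ j ∈ Icc 1 (min b (r / k)), (-1 : R) ^ (j - 1) * (b.choose j : R) *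
        ((n - j * k).choose (r - j * k) : R) =
      (n.choose r : R) - ∑ j ∈ range (b + 1), (-1) ^ j * (b.choose j : R) *
        if j * k ≤ r then ((n - j * k).choose (r - j * k) : R) else 0 := by
  have hIcc : Icc 1 (min b (r / k)) = (Icc 1 b).filter (fun j => j * k ≤ r) := by
    ext j
    simp only [mem_Icc, mem_filter, le_min_iff, Nat.le_div_iff_mul_le hk]
    tauto
  rw [hIcc, sum_filter, range_eq_Ico, sum_eq_sum_Ico_succ_bot b.succ_pos]
  simp only [pow_zero, Nat.choose_zero_right, zero_mul, zero_le, if_true, Nat.sub_zero,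
    Nat.cast_one, one_mul]
  rw [sub_add_cancel_left, ← sum_neg_distrib]
  refine sum_congr rfl fun j hj => ?_
  obtain ⟨i, rfl⟩ : ∃ i, j = i + 1 := Nat.exists_eq_add_of_le' (mem_Ico.1 hj).1
  split_ifs <;> simp [pow_succ]

end

end Polynomial

theorem stmt_8_general (n r k a : ℕ) (hk : 1 ≤ k) (hkr : k < r) (hn : r * a ≤ n) :
    ((a - 1 : ℕ) : ℤ) * ((n - (a - 1) * k).choose (r - k)) ≤
      ∑ j ∈ Finset.Icc 1 (min (a - 1) (r / k)),
        (-1 : ℤ) ^ (j - 1) * ((a - 1).choose j) * ((n - j * k).choose (r - j * k)) := by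
  have hbk : (a - 1) * k ≤ n :=
    calc (a - 1) * k ≤ a * r := Nat.mul_le_mul (Nat.sub_le a 1) hkr.le
      _ = r * a := mul_comm a r
      _ ≤ n := hn
  rw [sum_Icc_min_div_eq hk, ← coeff_X_add_one_pow_mul_sub_pow hbk, ← coeff_X_add_one_pow ℤ n r,
    ← coeff_sub]
  exact le_coeff_X_add_one_pow_sub (by omega) hkr.le hbk

/-- `g(n,r,k,a) ≥ (a-1)·C(n-(a-1)k, r-k)` for `r > k ≥ 1`, `a ≥ 2`, `n ≥ ra`. -/
theorem stmt_8 (n r k a : ℕ) (hk : 1 ≤ k) (hkr : k < r) (ha : 2 ≤ a) (hn : r * a ≤ n) :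
    ((a - 1 : ℕ) : ℤ) * ((n - (a - 1) * k).choose (r - k)) ≤
      ∑ j ∈ Finset.Icc 1 (min (a - 1) (r / k)),
        (-1 : ℤ) ^ (j - 1) * ((a - 1).choose j) * ((n - j * k).choose (r - j * k)) :=
  stmt_8_general n r k a hk hkr hn
end

section
/- Let $r, k, a, n$ be positive integers with $r > k \ge 1$, $a \ge 2$ and $n \ge 4r\binom{r}{k}^2 a$. Then $\binom{n-(a-1)k}{r-k} \ge (a-1)\binom{r}{k}^2\binom{n-k-1}{r-k-1}$. -/
/-! Multiplying by `(r-k)!` turns both binomials into descending factorials. The right-hand one is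
at least `(n - a r)^(r-k)`, while the left-hand side is at most `(a-1) C(r,k)² (r-k) n^(r-k-1)`;
Bernoulli's inequality `n^(m+1) ≤ (n-s)^(m+1) + (m+1) s n^m` bridges the two once
`(r-k)((a-1) C(r,k)² + a r) ≤ n`, which follows from `r ≤ C(r,k)` and the size of `n`. -/

namespace Nat

theorem le_choose_of_pos_of_lt {r k : ℕ} (hk : 0 < k) (hkr : k < r) : r ≤ r.choose k := by
  have hmul : r.choose k * k = r * (r - 1).choose (k - 1) := by
    simpa using choose_mul (n := r) (k := k) (s := 1) hk
  have hk_le : k ≤ (r - 1).choose (k - 1) := by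
    calc k = k.choose (k - 1) := by rw [choose_symm (by omega)]; simp
      _ ≤ (r - 1).choose (k - 1) := choose_le_choose _ (by omega)
  have : r * k ≤ r.choose k * k := hmul ▸ Nat.mul_le_mul_left r hk_le
  exact Nat.le_of_mul_le_mul_right this hk

theorem pow_succ_le_pow_add_mul {x y : ℕ} (hxy : x ≤ y) (m : ℕ) :
    y ^ (m + 1) ≤ x ^ (m + 1) + (m + 1) * (y - x) * y ^ m := by
  have hxy' : (x : ℤ) ≤ y := by exact_mod_cast hxy
  have h := (le_abs_self _).trans (abs_pow_sub_pow_le (y : ℤ) x (m + 1))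
  rw [abs_of_nonneg (sub_nonneg.2 hxy'), max_eq_left (by simpa using hxy), Nat.abs_cast,
    Nat.add_sub_cancel] at h
  zify [hxy]
  push_cast at h
  linarith

theorem mul_choose_le_choose_succ {c s n n' N m : ℕ} (hn' : n' ≤ n) (hN : n - s ≤ N - m)
    (hn : (m + 1) * (c + s) ≤ n) : c * n'.choose m ≤ N.choose (m + 1) := by
  have hs : s ≤ n := le_trans (by nlinarith) hn
  have hupper : (m + 1)! * (c * n'.choose m) ≤ (m + 1) * c * n ^ m := by
    calc (m + 1)! * (c * n'.choose m) = (m + 1) * c * n'.descFactorial m := by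
          rw [descFactorial_eq_factorial_mul_choose, factorial_succ]; ring
      _ ≤ (m + 1) * c * n ^ m :=
          Nat.mul_le_mul_left _ ((descFactorial_le_pow _ _).trans (Nat.pow_le_pow_left hn' _))
  have hbernoulli : (m + 1) * c * n ^ m ≤ (n - s) ^ (m + 1) := by
    have h := pow_succ_le_pow_add_mul (Nat.sub_le n s) m
    rw [Nat.sub_sub_self hs] at h
    have : (m + 1) * (c + s) * n ^ m ≤ n ^ (m + 1) := by
      rw [pow_succ']; exact Nat.mul_le_mul_right _ hn
    nlinarith
  have hlower : (n - s) ^ (m + 1) ≤ (m + 1)! * N.choose (m + 1) := by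
    rw [← descFactorial_eq_factorial_mul_choose]
    exact (Nat.pow_le_pow_left hN _).trans (by simpa using pow_sub_le_descFactorial N (m + 1))
  exact Nat.le_of_mul_le_mul_left (hupper.trans (hbernoulli.trans hlower)) (factorial_pos _)

end Nat

theorem stmt_9_general (n r k a : ℕ) (hk : 1 ≤ k) (hkr : k < r)
    (hn : 4 * r * (r.choose k) ^ 2 * a ≤ n) :
    (a - 1) * (r.choose k) ^ 2 * ((n - k - 1).choose (r - k - 1)) ≤
      (n - (a - 1) * k).choose (r - k) := by
  obtain ⟨m, hm⟩ : ∃ m, r - k = m + 1 := ⟨r - k - 1, by omega⟩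
  obtain _ | b := a
  · simp
  simp only [hm, Nat.add_sub_cancel]
  have hrC : r ≤ r.choose k := Nat.le_choose_of_pos_of_lt hk hkr
  have hr_sq : r ≤ r.choose k ^ 2 :=
    (Nat.le_self_pow two_ne_zero r).trans (Nat.pow_le_pow_left hrC 2)
  refine Nat.mul_choose_le_choose_succ (s := (b + 1) * r) (n := n) (by omega) ?_ ?_
  · have : b * k ≤ b * r := Nat.mul_le_mul_left b hkr.le
    have : (b + 1) * r = b * r + r := by ring
    omega
  · calc (m + 1) * (b * r.choose k ^ 2 + (b + 1) * r)
        ≤ r * ((b + 1) * r.choose k ^ 2 + (b + 1) * r.choose k ^ 2) := by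
          gcongr <;> omega
      _ ≤ n := by nlinarith

/-- For `r > k ≥ 1`, `a ≥ 2` and `n ≥ 4r·C(r,k)²·a`,
`C(n-(a-1)k, r-k) ≥ (a-1)·C(r,k)²·C(n-k-1, r-k-1)`. -/
theorem stmt_9 (n r k a : ℕ) (hk : 1 ≤ k) (hkr : k < r) (ha : 2 ≤ a)
    (hn : 4 * r * (r.choose k) ^ 2 * a ≤ n) :
    (a - 1) * (r.choose k) ^ 2 * ((n - k - 1).choose (r - k - 1)) ≤
      (n - (a - 1) * k).choose (r - k) :=
  stmt_9_general n r k a hk hkr hn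
end

section
/- Let $r \ge 2$ and $a \ge 1$ be integers and let $n \ge (r+1)a$. Then $\binom{n}{r} - \binom{n-(a-1)}{r} \ge \binom{ra-1}{r}$; that is, the $r$-uniform hypergraph on $n$ vertices whose edges are all $r$-sets meeting a fixed set of $a-1$ vertices has at least as many edges as the complete $r$-uniform hypergraph on $ra-1$ vertices. -/
lemma choose_add_le_aux (m k d : ℕ) :
    m.choose (k+1) + d * m.choose k ≤ (m+d).choose (k+1) := by
  induction d with
  | zero => simp
  | succ d ih =>
    have h1 : m.choose k ≤ (m+d).choose k := Nat.choose_le_choose k (Nat.le_add_right m d)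
    have h2 : (m + (d+1)).choose (k+1) = (m+d).choose k + (m+d).choose (k+1) := by
      have : m + (d+1) = (m+d) + 1 := by omega
      rw [this, Nat.choose_succ_succ]
    have h3 : m.choose (k+1) + (d+1) * m.choose k
        = (m.choose (k+1) + d * m.choose k) + m.choose k := by ring
    rw [h3]
    omega

/-- For `r ≥ 2`, `a ≥ 1` and `n ≥ (r+1)a`, we have
`C(n,r) - C(n-(a-1), r) ≥ C(ra-1, r)`, i.e. `|H₂| ≥ |H₁|`. -/
theorem stmt_12 (n r a : ℕ) (hr : 2 ≤ r) (ha : 1 ≤ a) (hn : (r + 1) * a ≤ n) :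
    (r * a - 1).choose r ≤ n.choose r - (n - (a - 1)).choose r := by
  have hra : r ≤ r * a := Nat.le_mul_of_pos_right r ha
  have hn' : r * a + a ≤ n := by
    have : (r + 1) * a = r * a + a := by ring
    omega
  -- key identity : C(ra-1, r) = (a-1) * C(ra-1, r-1)
  have key : (r * a - 1).choose r = (a - 1) * (r * a - 1).choose (r - 1) := by
    have h := Nat.choose_succ_right_eq (r * a - 1) (r - 1)
    have hr1 : r - 1 + 1 = r := by omega
    rw [hr1] at h
    have hsub : r * a - 1 - (r - 1) = r * (a - 1) := by
      have : r * (a - 1) = r * a - r := by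
        rw [Nat.mul_sub, Nat.mul_one]
      omega
    rw [hsub] at h
    have h' : (r * a - 1).choose r * r = ((a - 1) * (r * a - 1).choose (r - 1)) * r := by
      rw [h]; ring
    exact Nat.eq_of_mul_eq_mul_right (by omega) h'
  -- monotonicity
  have hmono : (r * a - 1).choose (r - 1) ≤ (n - (a - 1)).choose (r - 1) :=
    Nat.choose_le_choose (r - 1) (by omega)
  -- main inequality
  have hmain := choose_add_le_aux (n - (a - 1)) (r - 1) (a - 1)
  have hr1 : r - 1 + 1 = r := by omega
  rw [hr1] at hmain
  have hsum : n - (a - 1) + (a - 1) = n := by omega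
  rw [hsum] at hmain
  have : (a - 1) * (r * a - 1).choose (r - 1) ≤ (a - 1) * (n - (a - 1)).choose (r - 1) :=
    Nat.mul_le_mul_left _ hmono
  omega
end

section
/- Let $r, k, a$ be positive integers with $a \ge 2$, $1 \le k < r$ and $r \ge (a-1)(k-1)+1$, and set $n_0 = r(a-1) + r - (a-1)(k-1) - 1 = ra - (a-1)(k-1) - 1$. Then there exist $r$-element subsets $E_1, \ldots, E_{a-1}$ of $[n_0]$ such that every $r$-element subset $T \subseteq [n_0]$ satisfies $|T \cap E_i| \ge k$ for some $i \in [a-1]$. -/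
/-!
Cut `[n₀]` into consecutive blocks of length `r` and take `E_i` to be the `i`-th block for
`i < a - 1`. What is left after these `a - 1` full blocks has only `r - (a - 1)(k - 1) - 1`
elements, so an `r`-set meeting each `E_i` in at most `k - 1` elements would have at most
`(a - 1)(k - 1) + r - (a - 1)(k - 1) - 1 = r - 1` elements.
-/

open Finset

namespace FinBlock

def block {n : ℕ} (r i : ℕ) : Finset (Fin n) := univ.filter fun x => x.val / r = i

lemma card_block {n r i : ℕ} (hr : 0 < r) (hn : i * r + r ≤ n) :
    (block r i : Finset (Fin n)).card = r := by
  have hlt : ∀ m ∈ Ico (i * r) (i * r + r), m < n := fun m hm => by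
    rw [mem_Ico] at hm; omega
  have hblock : (block r i : Finset (Fin n)) = (Ico (i * r) (i * r + r)).attachFin hlt := by
    ext x
    simp only [block, mem_filter, mem_univ, true_and, mem_attachFin, mem_Ico, Nat.div_eq_iff hr]
    omega
  rw [hblock, card_attachFin, Nat.card_Ico, Nat.add_sub_cancel_left]

lemma card_filter_le_div_le {n r : ℕ} (m : ℕ) (hr : 0 < r) (T : Finset (Fin n)) :
    (T.filter fun x => m ≤ x.val / r).card ≤ n - m * r := by
  calc (T.filter fun x => m ≤ x.val / r).card ≤ (Ico (m * r) n).card := by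
        refine card_le_card_of_injOn Fin.val (fun x hx => ?_) Fin.val_injective.injOn
        rw [coe_filter, Set.mem_ofPred_eq, Nat.le_div_iff_mul_le hr] at hx
        exact mem_Ico.2 ⟨hx.2, x.isLt⟩
    _ = n - m * r := Nat.card_Ico _ _

/-- Pigeonhole over the first `m` blocks: all of `T` outside them lies in the last
`n - m r` points. -/
lemma card_le_of_card_inter_block_le {n r m b : ℕ} (hr : 0 < r) (T : Finset (Fin n))
    (hT : ∀ i < m, (T ∩ block r i).card ≤ b) : T.card ≤ m * b + (n - m * r) := by
  have hhead : (T.filter fun x => x.val / r < m).card ≤ m * b := by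
    calc (T.filter fun x => x.val / r < m).card ≤ b * (range m).card := by
          refine card_le_mul_card_image_of_maps_to (f := fun x : Fin n => x.val / r)
            (fun x hx => mem_range.2 (mem_filter.1 hx).2) b fun i hi => ?_
          refine le_trans (card_le_card fun x hx => ?_) (hT i (mem_range.1 hi))
          simp only [mem_filter] at hx
          simp [block, hx.1.1, hx.2]
      _ = m * b := by rw [card_range, mul_comm]
  have htail := card_filter_le_div_le m hr (T.filter fun x => ¬ x.val / r < m)
  rw [filter_filter] at htail
  simp only [not_lt, and_self] at htail
  rw [← card_filter_add_card_filter_not (s := T) fun x => x.val / r < m]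
  simp only [not_lt]
  omega

end FinBlock

open FinBlock in
theorem stmt_13_general (r k a : ℕ)
    (hr : (a - 1) * (k - 1) + 1 ≤ r) :
    ∃ F : Fin (a - 1) → Finset (Fin (r * a - (a - 1) * (k - 1) - 1)),
      (∀ i, (F i).card = r) ∧
      ∀ T : Finset (Fin (r * a - (a - 1) * (k - 1) - 1)),
        T.card = r → ∃ i, k ≤ (T ∩ F i).card := by
  have hr0 : 0 < r := by omega
  have hmul : (a - 1) * r = r * a - r := by rw [Nat.sub_one_mul, mul_comm]
  refine ⟨fun i => block r i, fun i => card_block hr0 ?_, fun T hT => ?_⟩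
  · have : (i.val + 1) * r ≤ (a - 1) * r := Nat.mul_le_mul_right r i.isLt
    rw [Nat.succ_mul] at this
    omega
  · by_contra! hsmall
    have := card_le_of_card_inter_block_le (m := a - 1) (b := k - 1) hr0 T
      fun i hi => Nat.le_sub_one_of_lt (hsmall ⟨i, hi⟩)
    omega

/-- For `a ≥ 2`, `1 ≤ k < r` with `r ≥ (a-1)(k-1)+1`, and
`n₀ = ra - (a-1)(k-1) - 1`, there exist `r`-subsets `E₁, …, E_{a-1}` of `[n₀]` such that every
`r`-subset `T` of `[n₀]` meets some `E_i` in at least `k` elements. -/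
theorem stmt_13 (r k a : ℕ) (hk : 1 ≤ k) (hkr : k < r) (ha : 2 ≤ a)
    (hr : (a - 1) * (k - 1) + 1 ≤ r) :
    ∃ F : Fin (a - 1) → Finset (Fin (r * a - (a - 1) * (k - 1) - 1)),
      (∀ i, (F i).card = r) ∧
      ∀ T : Finset (Fin (r * a - (a - 1) * (k - 1) - 1)),
        T.card = r → ∃ i, k ≤ (T ∩ F i).card :=
  stmt_13_general r k a hr
end

section
/- Let $r, k, a$ be integers with $r > k \ge 1$ and $a \ge 2$, and let $n$ be an integer with $n \ge 4r\binom{r}{k}^2 a$. Then $(n-r)\left(1 - \frac{r}{n - ar}\right)^{ar} \ge (a-1)(r-k)\binom{r}{k}^2$. -/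
private lemma choose_mono_half (n : ℕ) : ∀ j, j ≤ n / 2 → ∀ i, i ≤ j →
    n.choose i ≤ n.choose j := by
  intro j
  induction j with
  | zero => intro _ i hi; have : i = 0 := by omega
            simp [this]
  | succ m ih =>
    intro hj i hi
    rcases Nat.lt_or_ge i (m + 1) with h | h
    · exact le_trans (ih (by omega) i (by omega))
        (Nat.choose_le_succ_of_lt_half_left (by omega))
    · have : i = m + 1 := by omega
      simp [this]

private lemma r_le_choose {r k : ℕ} (hk : 1 ≤ k) (hkr : k < r) : r ≤ r.choose k := by
  rcases le_or_gt k (r / 2) with h | h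
  · calc r = r.choose 1 := (Nat.choose_one_right r).symm
    _ ≤ r.choose k := choose_mono_half r k h 1 hk
  · have h1 : 1 ≤ r - k := by omega
    have h2 : r - k ≤ r / 2 := by omega
    calc r = r.choose 1 := (Nat.choose_one_right r).symm
    _ ≤ r.choose (r - k) := choose_mono_half r (r - k) h2 1 h1
    _ = r.choose k := Nat.choose_symm (le_of_lt hkr)

set_option maxHeartbeats 1000000 in
/-- For `r > k ≥ 1`, `a ≥ 2` and `n ≥ 4r·C(r,k)²·a`,
`(n-r)(1 - r/(n-ar))^{ar} ≥ (a-1)(r-k)·C(r,k)²`. -/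
theorem stmt_15 (r k a n : ℕ) (hk : 1 ≤ k) (hkr : k < r) (ha : 2 ≤ a)
    (hn : 4 * r * (r.choose k) ^ 2 * a ≤ n) :
    ((a : ℝ) - 1) * ((r : ℝ) - k) * ((r.choose k : ℝ)) ^ 2 ≤
      ((n : ℝ) - r) * (1 - (r : ℝ) / ((n : ℝ) - a * r)) ^ (a * r) := by
  have hCn : r ≤ r.choose k := r_le_choose hk hkr
  have hC : (r : ℝ) ≤ (r.choose k : ℝ) := by exact_mod_cast hCn
  have hR : (2 : ℝ) ≤ (r : ℝ) := by exact_mod_cast (by omega : 2 ≤ r)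
  have hA : (2 : ℝ) ≤ (a : ℝ) := by exact_mod_cast ha
  have hK : (1 : ℝ) ≤ (k : ℝ) := by exact_mod_cast hk
  have hKR : (k : ℝ) + 1 ≤ (r : ℝ) := by exact_mod_cast hkr
  have hN : 4 * (r : ℝ) * ((r.choose k : ℝ)) ^ 2 * a ≤ (n : ℝ) := by exact_mod_cast hn
  set C : ℝ := (r.choose k : ℝ) with hCdef
  set R : ℝ := (r : ℝ)
  set A : ℝ := (a : ℝ)
  set N : ℝ := (n : ℝ)
  have hCpos : (0 : ℝ) < C := lt_of_lt_of_le (by linarith) hC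
  -- D = N - A*R > 0, in fact N - A*R ≥ 2*A*R^2
  have hC2 : R ^ 2 ≤ C ^ 2 := by nlinarith
  have hRC2 : R ≤ C ^ 2 := by nlinarith
  have hD2 : 2 * A * R ^ 2 + A * R ≤ N := by
    have h4 : 4 * R * R ^ 2 * A ≤ 4 * R * C ^ 2 * A := by
      have := mul_le_mul_of_nonneg_right (mul_le_mul_of_nonneg_left hC2
        (show (0:ℝ) ≤ 4 * R by linarith)) (show (0:ℝ) ≤ A by linarith)
      nlinarith [this]
    nlinarith [h4, mul_pos (show (0:ℝ) < A by linarith) (show (0:ℝ) < R by linarith)]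
  have hDpos : (0 : ℝ) < N - A * R := by nlinarith
  set x : ℝ := R / (N - A * R) with hxdef
  have hxpos : 0 < x := div_pos (by linarith) hDpos
  have hx : x * (2 * A * R) ≤ 1 := by
    rw [hxdef, div_mul_eq_mul_div, div_le_one hDpos]
    nlinarith
  have hARpos : (0 : ℝ) < A * R := by nlinarith
  -- Bernoulli
  have hbern : 1 - (a * r : ℕ) * x ≤ (1 - x) ^ (a * r) := by
    have := one_add_mul_le_pow (a := -x) (by nlinarith) (a * r)
    calc 1 - (a * r : ℕ) * x = 1 + (a * r : ℕ) * (-x) := by ring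
    _ ≤ (1 + -x) ^ (a * r) := this
    _ = (1 - x) ^ (a * r) := by ring_nf
  have hcast : ((a * r : ℕ) : ℝ) = A * R := by push_cast; rfl
  have hhalf : (1 : ℝ) / 2 ≤ (1 - x) ^ (a * r) := by
    refine le_trans ?_ hbern
    rw [hcast]
    nlinarith
  have hNR : 0 ≤ N - R := by nlinarith
  have hC2pos : (0:ℝ) < C ^ 2 := by positivity
  have h1 : (A - 1) * (R - (k : ℝ)) * C ^ 2 ≤ A * R * C ^ 2 := by
    have : (A - 1) * (R - (k : ℝ)) ≤ A * R := by nlinarith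
    nlinarith
  have h2 : 2 * (A * R * C ^ 2) ≤ N - R := by nlinarith
  calc (A - 1) * (R - (k : ℝ)) * C ^ 2 ≤ (N - R) * (1 / 2) := by linarith
  _ ≤ (N - R) * (1 - x) ^ (a * r) := by
        exact mul_le_mul_of_nonneg_left hhalf hNR
end
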